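/- arXiv:1103.3924 — 3 statements merged into one kernel-verified Lean document; each statement's English description precedes it below -/
import Mathlib

section
/- Let P = {p₁,…,p_k} and N = {n₁,…,n_k} be two disjoint sets of k distinct points in a metric space (C = P ∪ N, d). Then the length of a minimal connection L(C,d) = min over permutations σ of {1,…,k} of Σᵢ d(pᵢ, n_{σ(i)}) equals the maximum of Σᵢ (φ(pᵢ) − φ(nᵢ)) over all functions φ : C → ℝ that are 1-Lipschitz with respect to d. -/
open Finset

namespace BCLAux

variable {X : Type*} [MetricSpace X] {k : ℕ}

/-- Value of a "chain" starting at `x`: go to `n i₁`, take discount `-d(p i₁, n i₁)`,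
continue from `p i₁`, etc. -/
noncomputable def chainVal (p n : Fin k → X) : X → List (Fin k) → ℝ
  | _, [] => 0
  | x, (i :: l) => dist x (n i) - dist (p i) (n i) + chainVal p n (p i) l

/-- The sum of the metric edges of a chain from `x` through `l` ending at `n j`. -/
noncomputable def edgeSum (p n : Fin k → X) : X → List (Fin k) → Fin k → ℝ
  | x, [], j => dist x (n j)
  | x, (i :: l), j => dist x (n i) + edgeSum p n (p i) l j

variable (p n : Fin k → X)

lemma chainVal_concat (j : Fin k) : ∀ (l : List (Fin k)) (x : X),
    chainVal p n x (l ++ [j])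
      = edgeSum p n x l j - ((l ++ [j]).map (fun i => dist (p i) (n i))).sum
  | [], x => by simp [chainVal, edgeSum]
  | (i :: l), x => by
    simp only [List.cons_append, chainVal, edgeSum, List.append_eq,
      chainVal_concat j l (p i), List.map_cons, List.sum_cons]
    ring

lemma chainVal_concat_append (j : Fin k) (l₂ : List (Fin k)) :
    ∀ (l₁ : List (Fin k)) (x : X),
    chainVal p n x (l₁ ++ j :: l₂) = chainVal p n x (l₁ ++ [j]) + chainVal p n (p j) l₂
  | [], x => by simp [chainVal]
  | (i :: t), x => by
    simp only [List.cons_append, chainVal, List.append_eq,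
      chainVal_concat_append j l₂ t (p i)]
    ring

lemma edgeSum_eq_zip : ∀ (l : List (Fin k)) (b j : Fin k),
    edgeSum p n (p b) l j
      = (((b :: l).zip (l ++ [j])).map (fun q => dist (p q.1) (n q.2))).sum
  | [], b, j => by simp [edgeSum]
  | (i :: t), b, j => by
    simp only [edgeSum, List.cons_append, List.zip_cons_cons, List.map_cons, List.sum_cons,
      edgeSum_eq_zip t i j]

lemma zip_rotate_formPerm (L : List (Fin k)) (h : L.Nodup) :
    L.zip (L.rotate 1) = L.map (fun a => (a, L.formPerm a)) := by
  apply List.ext_getElem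
  · simp
  · intro i h1 h2
    have hi : i < L.length := by simpa using h2
    have hrot : i < (L.rotate 1).length := by simpa using hi
    rw [List.getElem_zip, List.getElem_map, List.getElem_rotate,
      List.formPerm_apply_getElem L h i hi]

lemma cycle_nonneg
    (hopt : ∀ σ : Equiv.Perm (Fin k), ∑ i, dist (p i) (n i) ≤ ∑ i, dist (p i) (n (σ i)))
    (j : Fin k) (l : List (Fin k)) (h : (j :: l).Nodup) :
    0 ≤ chainVal p n (p j) (l ++ [j]) := by
  classical
  set L : List (Fin k) := j :: l with hL
  set σ : Equiv.Perm (Fin k) := L.formPerm with hσ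
  have hrot : l ++ [j] = L.rotate 1 := by
    rw [hL, List.rotate_cons_succ, List.rotate_zero]
  have h1 : chainVal p n (p j) (l ++ [j])
      = ∑ a ∈ L.toFinset, (dist (p a) (n (σ a)) - dist (p a) (n a)) := by
    have hedge : edgeSum p n (p j) l j = (L.map (fun a => dist (p a) (n (σ a)))).sum := by
      rw [edgeSum_eq_zip]
      have hzip : L.zip (l ++ [j]) = L.map fun a => (a, σ a) :=
        hrot ▸ zip_rotate_formPerm L h
      rw [show (j :: l).zip (l ++ [j]) = L.zip (l ++ [j]) from rfl, hzip, List.map_map]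
      rfl
    have hcost : ((l ++ [j]).map (fun i => dist (p i) (n i))).sum
        = (L.map (fun i => dist (p i) (n i))).sum := by
      simp [hL]
      ring
    rw [chainVal_concat, hedge, hcost, Finset.sum_sub_distrib,
      List.sum_toFinset _ h, List.sum_toFinset _ h]
  have h2 : ∑ a ∈ L.toFinset, (dist (p a) (n (σ a)) - dist (p a) (n a))
      = ∑ a : Fin k, (dist (p a) (n (σ a)) - dist (p a) (n a)) := by
    refine Finset.sum_subset (Finset.subset_univ _) (fun a _ ha => ?_)
    rw [hσ, List.formPerm_apply_of_notMem (by simpa using ha), sub_self]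
  rw [h1, h2, Finset.sum_sub_distrib, sub_nonneg]
  exact hopt σ

lemma chainVal_lb : ∀ (l : List (Fin k)) (x : X),
    -((l.map (fun i => dist (p i) (n i))).sum) ≤ chainVal p n x l
  | [], x => by simp [chainVal]
  | (i :: l), x => by
    have h1 := chainVal_lb l (p i)
    have h2 : (0 : ℝ) ≤ dist x (n i) := dist_nonneg
    simp only [chainVal, List.map_cons, List.sum_cons]
    linarith

lemma chainVal_lip (l : List (Fin k)) (x y : X) :
    chainVal p n x l ≤ chainVal p n y l + dist x y := by
  cases l with
  | nil => simp [chainVal, dist_nonneg]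
  | cons i t =>
    have := dist_triangle x y (n i)
    simp only [chainVal]
    linarith

/-- The key construction: if the identity matching is optimal, there is a globally
`1`-Lipschitz potential achieving equality on each matched pair. -/
lemma key (hopt : ∀ σ : Equiv.Perm (Fin k), ∑ i, dist (p i) (n i) ≤ ∑ i, dist (p i) (n (σ i))) :
    ∃ φ : X → ℝ, (∀ x y : X, |φ x - φ y| ≤ dist x y) ∧
      ∀ i, φ (p i) - φ (n i) = dist (p i) (n i) := by
  classical
  set c : ℝ := ∑ i, dist (p i) (n i) with hc
  set S : X → Set ℝ := fun x => {r | ∃ l : List (Fin k), l.Nodup ∧ r = chainVal p n x l}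
    with hS
  have hne : ∀ x, (S x).Nonempty := fun x => ⟨0, [], List.nodup_nil, rfl⟩
  have hlb : ∀ x, ∀ r ∈ S x, -c ≤ r := by
    rintro x r ⟨l, hl, rfl⟩
    have h1 := chainVal_lb p n l x
    have h2 : (l.map (fun i => dist (p i) (n i))).sum
        = ∑ i ∈ l.toFinset, dist (p i) (n i) := (List.sum_toFinset _ hl).symm
    have h3 : ∑ i ∈ l.toFinset, dist (p i) (n i) ≤ c :=
      Finset.sum_le_sum_of_subset_of_nonneg (Finset.subset_univ _)
        (fun i _ _ => dist_nonneg)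
    rw [h2] at h1
    linarith
  have hbdd : ∀ x, BddBelow (S x) := fun x => ⟨-c, hlb x⟩
  set φ : X → ℝ := fun x => sInf (S x) with hφ
  have hmem : ∀ (x : X) (l : List (Fin k)), l.Nodup → φ x ≤ chainVal p n x l :=
    fun x l hl => csInf_le (hbdd x) ⟨l, hl, rfl⟩
  have hlip : ∀ x y : X, φ x ≤ φ y + dist x y := by
    intro x y
    have : φ x - dist x y ≤ φ y := by
      refine le_csInf (hne y) ?_
      rintro r ⟨l, hl, rfl⟩
      have h1 := chainVal_lip p n l x y
      have h2 := hmem x l hl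
      linarith
    linarith
  refine ⟨φ, fun x y => abs_sub_le_iff.2 ⟨by have := hlip x y; linarith,
    by have := hlip y x; rw [dist_comm] at this; linarith⟩, ?_⟩
  intro j
  have hle : φ (p j) - φ (n j) ≤ dist (p j) (n j) := by
    have := hlip (p j) (n j); linarith
  have hge : φ (n j) + dist (p j) (n j) ≤ φ (p j) := by
    refine le_csInf (hne (p j)) ?_
    rintro r ⟨l, hl, rfl⟩
    by_cases hj : j ∈ l
    · obtain ⟨l₁, l₂, rfl⟩ := List.append_of_mem hj
      rw [List.nodup_append] at hl
      obtain ⟨h₁, h₂, h₃⟩ := hl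
      have hjl₁ : j ∉ l₁ := fun hmem' => h₃ j hmem' j List.mem_cons_self rfl
      have hjl₂ : j ∉ l₂ := (List.nodup_cons.1 h₂).1
      have hl₂ : l₂.Nodup := (List.nodup_cons.1 h₂).2
      have hcyc := cycle_nonneg p n hopt j l₁ (List.nodup_cons.2 ⟨hjl₁, h₁⟩)
      have hsplit := chainVal_concat_append p n j l₂ l₁ (p j)
      have hstep : chainVal p n (n j) (j :: l₂)
          = chainVal p n (p j) l₂ - dist (p j) (n j) := by
        simp [chainVal]; ring
      have h4 := hmem (n j) (j :: l₂) (List.nodup_cons.2 ⟨hjl₂, hl₂⟩)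
      rw [hstep] at h4
      linarith
    · have hstep : chainVal p n (n j) (j :: l)
          = chainVal p n (p j) l - dist (p j) (n j) := by
        simp [chainVal]; ring
      have h4 := hmem (n j) (j :: l) (List.nodup_cons.2 ⟨hj, hl⟩)
      rw [hstep] at h4
      linarith
  linarith

end BCLAux

/-- Brezis–Coron–Lieb duality: the minimal connection length
`L(C,d) = min_σ Σᵢ d(pᵢ, n_{σ(i)})` equals the maximum of `Σᵢ (φ(pᵢ) - φ(nᵢ))`
over `1`-Lipschitz functions `φ` on `C = P ∪ N`. -/
theorem stmt_6 {X : Type*} [MetricSpace X] (k : ℕ) (hk : 0 < k)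
    (p n : Fin k → X) (hp : Function.Injective p) (hn : Function.Injective n)
    (hpn : ∀ i j, p i ≠ n j) :
    ∃ L : ℝ,
      IsLeast {L' : ℝ | ∃ σ : Equiv.Perm (Fin k), L' = ∑ i, dist (p i) (n (σ i))} L ∧
      IsGreatest {S : ℝ | ∃ φ : X → ℝ,
        (∀ x ∈ Set.range p ∪ Set.range n, ∀ y ∈ Set.range p ∪ Set.range n,
          |φ x - φ y| ≤ dist x y) ∧ S = ∑ i, (φ (p i) - φ (n i))} L := by
  classical
  obtain ⟨σ₀, -, hσ₀⟩ := Finset.exists_min_image Finset.univ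
    (fun σ : Equiv.Perm (Fin k) => ∑ i, dist (p i) (n (σ i))) ⟨1, Finset.mem_univ 1⟩
  refine ⟨∑ i, dist (p i) (n (σ₀ i)), ⟨⟨σ₀, rfl⟩, ?_⟩, ?_, ?_⟩
  · rintro L' ⟨σ, rfl⟩
    exact hσ₀ σ (Finset.mem_univ σ)
  · -- membership in the dual set
    obtain ⟨φ, hlip, heq⟩ := BCLAux.key p (n ∘ σ₀) (fun σ => by
      simpa using hσ₀ (σ₀ * σ) (Finset.mem_univ _))
    refine ⟨φ, fun x _ y _ => hlip x y, ?_⟩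
    have h1 : ∑ i, φ (n (σ₀ i)) = ∑ i, φ (n i) := Equiv.sum_comp σ₀ (fun i => φ (n i))
    calc ∑ i, dist (p i) (n (σ₀ i)) = ∑ i, (φ (p i) - φ (n (σ₀ i))) := by
          exact Finset.sum_congr rfl (fun i _ => (heq i).symm)
      _ = ∑ i, φ (p i) - ∑ i, φ (n (σ₀ i)) := Finset.sum_sub_distrib _ _
      _ = ∑ i, φ (p i) - ∑ i, φ (n i) := by rw [h1]
      _ = ∑ i, (φ (p i) - φ (n i)) := (Finset.sum_sub_distrib _ _).symm
  · -- upper bound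
    rintro S ⟨φ, hlip, rfl⟩
    have h1 : ∑ i, φ (n (σ₀ i)) = ∑ i, φ (n i) := Equiv.sum_comp σ₀ (fun i => φ (n i))
    have h2 : ∀ i, φ (p i) - φ (n (σ₀ i)) ≤ dist (p i) (n (σ₀ i)) := fun i =>
      (abs_sub_le_iff.1 (hlip _ (Set.mem_union_left _ ⟨i, rfl⟩)
        _ (Set.mem_union_right _ ⟨σ₀ i, rfl⟩))).1
    calc ∑ i, (φ (p i) - φ (n i)) = ∑ i, φ (p i) - ∑ i, φ (n i) := Finset.sum_sub_distrib _ _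
      _ = ∑ i, φ (p i) - ∑ i, φ (n (σ₀ i)) := by rw [h1]
      _ = ∑ i, (φ (p i) - φ (n (σ₀ i))) := (Finset.sum_sub_distrib _ _).symm
      _ ≤ ∑ i, dist (p i) (n (σ₀ i)) := Finset.sum_le_sum (fun i _ => h2 i)
end

section
/- Let P = {p₁,…,p_k}, N = {n₁,…,n_k} be disjoint sets of distinct points in a metric space with distance d, and suppose the identity permutation is a minimal connection, i.e. Σᵢ d(pᵢ,nᵢ) = min over σ of Σᵢ d(pᵢ,n_{σ(i)}). Given ξ₀ : P∪N → ℝ that is 1-Lipschitz w.r.t. d and satisfies ξ₀(pᵢ) − ξ₀(nᵢ) = d(pᵢ,nᵢ) for all i, the function ξ₁(x) = maxᵢ { ξ₀(pᵢ) − d(x,pᵢ) } defined on the whole space is 1-Lipschitz w.r.t. d and extends ξ₀ (i.e., ξ₁ = ξ₀ on P∪N). -/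
/-- McShane-type extension: if the identity is a minimal connection and `ξ₀` is
`1`-Lipschitz on `C = P ∪ N` with `ξ₀(pᵢ) - ξ₀(nᵢ) = d(pᵢ,nᵢ)`, then
`ξ₁(x) = maxᵢ (ξ₀(pᵢ) - d(x,pᵢ))` is `1`-Lipschitz on the whole space and agrees
with `ξ₀` on `C`. -/
theorem stmt_7 {X : Type*} [MetricSpace X] (k : ℕ) (p n : Fin k → X)
    (hne : (Finset.univ : Finset (Fin k)).Nonempty)
    (ξ₀ : X → ℝ)
    (hlip : ∀ x ∈ Set.range p ∪ Set.range n, ∀ y ∈ Set.range p ∪ Set.range n,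
      |ξ₀ x - ξ₀ y| ≤ dist x y)
    (hval : ∀ i, ξ₀ (p i) - ξ₀ (n i) = dist (p i) (n i))
    (hmin : ∀ σ : Equiv.Perm (Fin k),
      ∑ i, dist (p i) (n i) ≤ ∑ i, dist (p i) (n (σ i))) :
    (∀ x y : X,
      |Finset.univ.sup' hne (fun i => ξ₀ (p i) - dist x (p i)) -
        Finset.univ.sup' hne (fun i => ξ₀ (p i) - dist y (p i))| ≤ dist x y) ∧
    (∀ j, Finset.univ.sup' hne (fun i => ξ₀ (p i) - dist (p j) (p i)) = ξ₀ (p j) ∧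
          Finset.univ.sup' hne (fun i => ξ₀ (p i) - dist (n j) (p i)) = ξ₀ (n j)) := by
  constructor
  · intro x y
    rw [abs_sub_le_iff]
    constructor
    · rw [sub_le_iff_le_add]
      apply Finset.sup'_le
      intro i _
      have h1 : ξ₀ (p i) - dist y (p i) ≤
          Finset.univ.sup' hne (fun i => ξ₀ (p i) - dist y (p i)) :=
        Finset.le_sup' (fun i => ξ₀ (p i) - dist y (p i)) (Finset.mem_univ i)
      have h2 : dist y (p i) ≤ dist y x + dist x (p i) := dist_triangle _ _ _
      rw [dist_comm x y]; linarith
    · rw [sub_le_iff_le_add]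
      apply Finset.sup'_le
      intro i _
      have h1 : ξ₀ (p i) - dist x (p i) ≤
          Finset.univ.sup' hne (fun i => ξ₀ (p i) - dist x (p i)) :=
        Finset.le_sup' (fun i => ξ₀ (p i) - dist x (p i)) (Finset.mem_univ i)
      have h2 : dist x (p i) ≤ dist x y + dist y (p i) := dist_triangle _ _ _
      linarith
  · intro j
    constructor
    · apply le_antisymm
      · apply Finset.sup'_le
        intro i _
        have := hlip (p i) (Or.inl ⟨i, rfl⟩) (p j) (Or.inl ⟨j, rfl⟩)
        rw [abs_sub_le_iff] at this
        have := this.1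
        rw [dist_comm (p j) (p i)]; linarith
      · have h := Finset.le_sup' (fun i => ξ₀ (p i) - dist (p j) (p i))
          (Finset.mem_univ j)
        simp only [dist_self, sub_zero] at h; exact h
    · apply le_antisymm
      · apply Finset.sup'_le
        intro i _
        have := hlip (p i) (Or.inl ⟨i, rfl⟩) (n j) (Or.inr ⟨j, rfl⟩)
        rw [abs_sub_le_iff] at this
        have := this.1
        rw [dist_comm (n j) (p i)]; linarith
      · have h := Finset.le_sup' (fun i => ξ₀ (p i) - dist (n j) (p i))
          (Finset.mem_univ j)
        have hv := hval j
        rw [dist_comm (n j) (p j)] at h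
        linarith
end

section
/- Let ω ⊂ ℝ³ be a bounded open convex set, 0 < b < 1, and α_δ the weight equal to b² on the δ-neighborhood of ω and 1 elsewhere. Let C = P ∪ N be 2k distinct points with P = {p₁,…,p_k}, N = {n₁,…,n_k}. Then the minimal connection length L(C, d_{α_δ}) = min over permutations σ of Σᵢ d_{α_δ}(pᵢ, n_{σ(i)}) satisfies |L(C, d_{α_δ}) − L(C, d_{α_{δ'}})| ≤ 4k|δ' − δ| for all 0 ≤ δ < δ' ≤ δ₀. -/
open MeasureTheory Pointwise
open scoped Classical

open Filter
open scoped Topology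

noncomputable section

/-- Euclidean three-space. -/
abbrev E3 := EuclideanSpace ℝ (Fin 3)

/-- Weighted geodesic distance: infimum of the `f`-weighted length over Lipschitz
curves `γ : [0,1] → ℝ³` joining `x` and `y`. -/
noncomputable def wdist (f : E3 → ℝ) (x y : E3) : ℝ :=
  sInf { L : ℝ | ∃ γ : ℝ → E3, (∃ K : NNReal, LipschitzWith K γ) ∧ γ 0 = x ∧ γ 1 = y ∧
    L = ∫ s in (0:ℝ)..1, f (γ s) * ‖deriv γ s‖ }
/-- The weight `α_δ`, equal to `b²` on the `δ`-neighborhood `ω_δ = ω + B(0,δ)`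
(with `ω_0 = ω`) and `1` elsewhere. -/
noncomputable def alphaW (b : ℝ) (ω : Set E3) (δ : ℝ) : E3 → ℝ :=
  fun x => if x ∈ ω ∪ (ω + Metric.ball (0:E3) δ) then b^2 else 1

section aux

variable {b δ δ' : ℝ} {ω : Set E3}

lemma omegaN_open (hopen : IsOpen ω) : IsOpen (ω ∪ (ω + Metric.ball (0:E3) δ)) :=
  hopen.union Metric.isOpen_ball.add_left

lemma omegaN_mono (h : δ ≤ δ') :
    ω ∪ (ω + Metric.ball (0:E3) δ) ⊆ ω ∪ (ω + Metric.ball (0:E3) δ') :=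
  Set.union_subset_union_right _ (Set.add_subset_add_left (Metric.ball_subset_ball h))

lemma omegaN_convex (hconv : Convex ℝ ω) (hδ : 0 ≤ δ) :
    Convex ℝ (ω ∪ (ω + Metric.ball (0:E3) δ)) := by
  rcases eq_or_lt_of_le hδ with h | h
  · have : Metric.ball (0:E3) δ = ∅ := by
      simp [Metric.ball_eq_empty, ← h]
    simp [this, Set.add_empty]
    exact hconv
  · have hsub : ω ⊆ ω + Metric.ball (0:E3) δ := by
      intro x hx
      exact ⟨x, hx, 0, by simpa using h, by simp⟩
    rw [Set.union_eq_self_of_subset_left hsub]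
    exact hconv.add (convex_ball 0 δ)

lemma alphaW_measurable (hopen : IsOpen ω) : Measurable (alphaW b ω δ) :=
  Measurable.ite (omegaN_open hopen).measurableSet measurable_const measurable_const

lemma alphaW_pos (hb : 0 < b) (x : E3) : 0 < alphaW b ω δ x := by
  unfold alphaW; split
  · positivity
  · norm_num

lemma alphaW_le_one (hb : 0 < b) (hb1 : b ≤ 1) (x : E3) : alphaW b ω δ x ≤ 1 := by
  unfold alphaW; split
  · nlinarith
  · exact le_refl 1

lemma sq_le_alphaW (hb : 0 < b) (hb1 : b ≤ 1) (x : E3) : b^2 ≤ alphaW b ω δ x := by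
  unfold alphaW; split
  · exact le_refl _
  · nlinarith

lemma alphaW_mono (hb : 0 < b) (hb1 : b ≤ 1) (h : δ ≤ δ') (x : E3) :
    alphaW b ω δ' x ≤ alphaW b ω δ x := by
  unfold alphaW
  by_cases hx : x ∈ ω ∪ (ω + Metric.ball (0:E3) δ)
  · rw [if_pos hx, if_pos (omegaN_mono h hx)]
  · rw [if_neg hx]
    split
    · nlinarith
    · exact le_refl 1

end aux

section aux2

lemma norm_deriv_le_lip {γ : ℝ → E3} {K : NNReal} (h : LipschitzWith K γ) (s : ℝ) :
    ‖deriv γ s‖ ≤ K := by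
  have h1 : deriv γ s = fderiv ℝ γ s 1 := by rw [fderiv_apply_one_eq_deriv]
  calc ‖deriv γ s‖ = ‖fderiv ℝ γ s 1‖ := by rw [h1]
    _ ≤ ‖fderiv ℝ γ s‖ * ‖(1:ℝ)‖ := (fderiv ℝ γ s).le_opNorm 1
    _ ≤ K * 1 := by
        gcongr
        · exact norm_fderiv_le_of_lipschitz ℝ h
        · simp
    _ = K := mul_one _

lemma intervalIntegrable_of_bound {g : ℝ → ℝ} (hg : Measurable g) (C : ℝ)
    (hC : ∀ s, |g s| ≤ C) (a c : ℝ) : IntervalIntegrable g volume a c := by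
  rw [intervalIntegrable_iff]
  refine Integrable.mono' (g := fun _ => C)
    (integrableOn_const measure_Ioc_lt_top.ne)
    hg.aestronglyMeasurable.restrict ?_
  exact Filter.Eventually.of_forall fun s => (Real.norm_eq_abs _) ▸ hC s

lemma integrand_II {f : E3 → ℝ} (hf : Measurable f) (hf0 : ∀ x, 0 ≤ f x) (hf1 : ∀ x, f x ≤ 1)
    {γ : ℝ → E3} {K : NNReal} (hγ : LipschitzWith K γ) (a c : ℝ) :
    IntervalIntegrable (fun s => f (γ s) * ‖deriv γ s‖) volume a c := by
  refine intervalIntegrable_of_bound ?_ K ?_ a c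
  · exact (hf.comp hγ.continuous.measurable).mul (measurable_deriv γ).norm
  · intro s
    rw [abs_mul, abs_of_nonneg (hf0 _), abs_of_nonneg (norm_nonneg _)]
    calc f (γ s) * ‖deriv γ s‖ ≤ 1 * (K : ℝ) :=
          mul_le_mul (hf1 _) (norm_deriv_le_lip hγ s) (norm_nonneg _) zero_le_one
      _ = K := one_mul _

lemma hasDerivAt_seg (P V : E3) (c m s : ℝ) :
    HasDerivAt (fun s => P + (c * s + m) • V) (c • V) s := by
  have h1 : HasDerivAt (fun t : ℝ => c * t + m) c s := by
    simpa using ((hasDerivAt_id s).const_mul c).add_const m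
  simpa using (h1.smul_const V).const_add P

lemma deriv_seg (P V : E3) (c m s : ℝ) :
    deriv (fun s => P + (c * s + m) • V) s = c • V :=
  (hasDerivAt_seg P V c m s).deriv

lemma lipschitzWith_seg (P V : E3) (c m : ℝ) :
    LipschitzWith (Real.nnabs c * ‖V‖₊) (fun s => P + (c * s + m) • V) := by
  apply LipschitzWith.of_dist_le_mul
  intro s t
  rw [dist_eq_norm, dist_eq_norm]
  have h2 : (P + (c * s + m) • V) - (P + (c * t + m) • V) = (c * (s - t)) • V := by
    rw [add_sub_add_left_eq_sub, ← sub_smul]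
    congr 1
    ring
  rw [h2, norm_smul]
  push_cast
  rw [Real.norm_eq_abs, abs_mul, Real.norm_eq_abs]
  ring_nf
  exact le_refl _

lemma wdist_set_nonempty (f : E3 → ℝ) (x y : E3) :
    { L : ℝ | ∃ γ : ℝ → E3, (∃ K : NNReal, LipschitzWith K γ) ∧ γ 0 = x ∧ γ 1 = y ∧
      L = ∫ s in (0:ℝ)..1, f (γ s) * ‖deriv γ s‖ }.Nonempty := by
  refine ⟨_, fun s => x + ((1:ℝ) * s + 0) • (y - x), ⟨_, lipschitzWith_seg x (y - x) 1 0⟩,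
    by simp, by simp, rfl⟩

lemma wdist_bddBelow (f : E3 → ℝ) (hf0 : ∀ x, 0 ≤ f x) (x y : E3) :
    BddBelow { L : ℝ | ∃ γ : ℝ → E3, (∃ K : NNReal, LipschitzWith K γ) ∧ γ 0 = x ∧ γ 1 = y ∧
      L = ∫ s in (0:ℝ)..1, f (γ s) * ‖deriv γ s‖ } := by
  refine ⟨0, ?_⟩
  rintro L ⟨γ, _, _, _, rfl⟩
  exact intervalIntegral.integral_nonneg zero_le_one
    (fun u _ => mul_nonneg (hf0 _) (norm_nonneg _))

lemma wdist_mono {f g : E3 → ℝ} (hf : Measurable f) (hf0 : ∀ z, 0 ≤ f z)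
    (hg : Measurable g) (hg0 : ∀ z, 0 ≤ g z) (hg1 : ∀ z, g z ≤ 1)
    (hfg : ∀ z, f z ≤ g z) (x y : E3) : wdist f x y ≤ wdist g x y := by
  have hf1 : ∀ z, f z ≤ 1 := fun z => le_trans (hfg z) (hg1 z)
  apply le_csInf (wdist_set_nonempty g x y)
  rintro L ⟨γ, ⟨K, hK⟩, h0, h1, rfl⟩
  refine le_trans (csInf_le (wdist_bddBelow f hf0 x y) ⟨γ, ⟨K, hK⟩, h0, h1, rfl⟩) ?_
  exact intervalIntegral.integral_mono_on zero_le_one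
    (integrand_II hf hf0 hf1 hK 0 1) (integrand_II hg hg0 hg1 hK 0 1)
    (fun s _ => mul_le_mul_of_nonneg_right (hfg _) (norm_nonneg _))

end aux2

lemma tendsto_nat_smul_sub {f : ℝ → E3} {t : ℝ} {v : E3} (hf : HasDerivAt f v t) :
    Tendsto (fun n : ℕ => ((n:ℝ)+1) • (f (t + ((n:ℝ)+1)⁻¹) - f t)) atTop (𝓝 v) := by
  have hslope := hasDerivAt_iff_tendsto_slope.1 hf
  have hpos : ∀ n : ℕ, (0:ℝ) < ((n:ℝ)+1)⁻¹ := fun n => by positivity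
  have hseq : Tendsto (fun n : ℕ => t + ((n:ℝ)+1)⁻¹) atTop (𝓝[≠] t) := by
    apply tendsto_nhdsWithin_of_tendsto_nhds_of_eventually_within
    · have h0 : Tendsto (fun n : ℕ => ((n:ℝ)+1)⁻¹) atTop (𝓝 0) := by
        simpa [one_div] using tendsto_one_div_add_atTop_nhds_zero_nat (𝕜 := ℝ)
      simpa using tendsto_const_nhds.add h0
    · exact Eventually.of_forall fun n => by
        simp only [Set.mem_compl_iff, Set.mem_singleton_iff]
        exact ne_of_gt (by linarith [hpos n])
  have hcomp := hslope.comp hseq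
  convert hcomp using 2 with n
  simp only [Function.comp_apply, slope_def_module]
  rw [add_sub_cancel_left, inv_inv]

lemma lipschitz_integral_deriv {γ : ℝ → E3} {K : NNReal} (hγ : LipschitzWith K γ)
    {a c : ℝ} : (∫ s in a..c, deriv γ s) = γ c - γ a := by
  have hmeas : Measurable (deriv γ) := measurable_deriv γ
  have hγcont := hγ.continuous
  have hder_int : IntervalIntegrable (deriv γ) volume a c := by
    rw [intervalIntegrable_iff]
    refine Integrable.mono' (g := fun _ => (K:ℝ))
      (integrableOn_const measure_Ioc_lt_top.ne)
      hmeas.aestronglyMeasurable.restrict ?_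
    exact Eventually.of_forall fun s => norm_deriv_le_lip hγ s
  have hγint : ∀ p q : ℝ, IntervalIntegrable γ volume p q := fun p q =>
    hγcont.intervalIntegrable p q
  set G : ℝ → E3 := fun t => ∫ u in (0:ℝ)..t, γ u with hG
  have hGdiff : ∀ p q : ℝ, (∫ u in p..q, γ u) = G q - G p := by
    intro p q
    have h := intervalIntegral.integral_add_adjacent_intervals (hγint 0 p) (hγint p q)
    have : G q = G p + ∫ u in p..q, γ u := by rw [hG]; exact h.symm
    rw [this]; abel
  set F : ℕ → ℝ → E3 := fun n s => ((n:ℝ)+1) • (γ (s + ((n:ℝ)+1)⁻¹) - γ s) with hF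
  have hlim : Tendsto (fun n => ∫ s in a..c, F n s) atTop (𝓝 (∫ s in a..c, deriv γ s)) := by
    apply intervalIntegral.tendsto_integral_filter_of_dominated_convergence
      (bound := fun _ => (K:ℝ))
    · refine Eventually.of_forall fun n => Continuous.aestronglyMeasurable ?_
      exact (by fun_prop : Continuous fun s => ((n:ℝ)+1) • (γ (s + ((n:ℝ)+1)⁻¹) - γ s))
    · refine Eventually.of_forall fun n => ae_of_all _ fun s _ => ?_
      have h1 : ‖F n s‖ = ((n:ℝ)+1) * ‖γ (s + ((n:ℝ)+1)⁻¹) - γ s‖ := by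
        rw [hF]; simp only [norm_smul, Real.norm_eq_abs]
        rw [abs_of_pos (by positivity)]
      rw [h1]
      have h2 : ‖γ (s + ((n:ℝ)+1)⁻¹) - γ s‖ ≤ K * ((n:ℝ)+1)⁻¹ := by
        have := hγ.dist_le_mul (s + ((n:ℝ)+1)⁻¹) s
        rw [dist_eq_norm] at this
        have habs : |((n:ℝ)+1)⁻¹| = ((n:ℝ)+1)⁻¹ := abs_of_pos (by positivity)
        have hd : dist (s + ((n:ℝ)+1)⁻¹) s = ((n:ℝ)+1)⁻¹ := by
          rw [Real.dist_eq]; rw [add_sub_cancel_left, habs]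
        rw [hd] at this
        exact this
      calc ((n:ℝ)+1) * ‖γ (s + ((n:ℝ)+1)⁻¹) - γ s‖ ≤ ((n:ℝ)+1) * ((K:ℝ) * ((n:ℝ)+1)⁻¹) := by
            gcongr
        _ = (K:ℝ) := by field_simp
    · exact intervalIntegrable_const
    · have hae : ∀ᵐ s ∂(volume : Measure ℝ), DifferentiableAt ℝ γ s := hγ.ae_differentiableAt
      filter_upwards [hae] with s hs _
      exact tendsto_nat_smul_sub hs.hasDerivAt
  have hFval : ∀ n : ℕ, (∫ s in a..c, F n s) =
      (((n:ℝ)+1) • (G (c + ((n:ℝ)+1)⁻¹) - G c)) - (((n:ℝ)+1) • (G (a + ((n:ℝ)+1)⁻¹) - G a)) := by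
    intro n
    have hcomp : (∫ s in a..c, γ (s + ((n:ℝ)+1)⁻¹)) = ∫ s in (a + ((n:ℝ)+1)⁻¹)..(c + ((n:ℝ)+1)⁻¹), γ s :=
      intervalIntegral.integral_comp_add_right γ _
    calc (∫ s in a..c, F n s)
        = ((n:ℝ)+1) • ((∫ s in a..c, γ (s + ((n:ℝ)+1)⁻¹)) - ∫ s in a..c, γ s) := by
          rw [hF]
          rw [intervalIntegral.integral_smul]
          congr 1
          exact intervalIntegral.integral_sub
            ((hγcont.comp (continuous_id.add continuous_const)).intervalIntegrable a c)
            (hγint a c)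
      _ = ((n:ℝ)+1) • ((G (c + ((n:ℝ)+1)⁻¹) - G (a + ((n:ℝ)+1)⁻¹)) - (G c - G a)) := by
          rw [hcomp, hGdiff, hGdiff]
      _ = _ := by rw [← smul_sub]; congr 1; abel
  have hGc : HasDerivAt G (γ c) c :=
    intervalIntegral.integral_hasDerivAt_right (hγint 0 c)
      (hγcont.stronglyMeasurable.stronglyMeasurableAtFilter) hγcont.continuousAt
  have hGa : HasDerivAt G (γ a) a :=
    intervalIntegral.integral_hasDerivAt_right (hγint 0 a)
      (hγcont.stronglyMeasurable.stronglyMeasurableAtFilter) hγcont.continuousAt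
  have hlim2 : Tendsto (fun n => ∫ s in a..c, F n s) atTop (𝓝 (γ c - γ a)) := by
    have := (tendsto_nat_smul_sub hGc).sub (tendsto_nat_smul_sub hGa)
    apply this.congr
    intro n
    exact (hFval n).symm
  exact tendsto_nhds_unique hlim hlim2

lemma lipschitz_norm_sub_le_integral {γ : ℝ → E3} {K : NNReal} (hγ : LipschitzWith K γ)
    {a c : ℝ} (hac : a ≤ c) : ‖γ c - γ a‖ ≤ ∫ s in a..c, ‖deriv γ s‖ := by
  rw [← lipschitz_integral_deriv hγ (a := a) (c := c)]
  exact intervalIntegral.norm_integral_le_integral_norm hac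


lemma lipschitz_glue {f g : ℝ → E3} {K : NNReal} (hf : LipschitzWith K f)
    (hg : LipschitzWith K g) {a : ℝ} (hfg : f a = g a) :
    LipschitzWith K (fun s => if s ≤ a then f s else g s) := by
  apply LipschitzWith.of_dist_le_mul
  have key : ∀ s t : ℝ, s ≤ a → ¬ t ≤ a → dist (f s) (g t) ≤ K * dist s t := by
    intro s t hs ht
    push_neg at ht
    calc dist (f s) (g t) ≤ dist (f s) (f a) + dist (f a) (g t) := dist_triangle _ _ _
      _ = dist (f s) (f a) + dist (g a) (g t) := by rw [hfg]
      _ ≤ K * dist s a + K * dist a t := add_le_add (hf.dist_le_mul s a) (hg.dist_le_mul a t)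
      _ = K * (dist s a + dist a t) := by ring
      _ ≤ K * dist s t := by
          have h1 : dist s a = a - s := by rw [Real.dist_eq, abs_of_nonpos (by linarith)]; ring
          have h2 : dist a t = t - a := by rw [Real.dist_eq, abs_of_nonpos (by linarith)]; ring
          have h3 : dist s t = t - s := by rw [Real.dist_eq, abs_of_nonpos (by linarith)]; ring
          rw [h1, h2, h3]
          have : (a - s) + (t - a) = t - s := by ring
          rw [this]
  intro s t
  by_cases hs : s ≤ a <;> by_cases ht : t ≤ a <;>
    simp only [hs, ht, if_true, if_false]
  · exact hf.dist_le_mul s t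
  · exact key s t hs ht
  · rw [dist_comm, dist_comm s t]; exact key t s ht hs
  · exact hg.dist_le_mul s t

lemma deriv_comp_affine (γ : ℝ → E3) (c d s : ℝ) :
    deriv (fun t => γ (c * t + d)) s = c • deriv γ (c * s + d) := by
  rcases eq_or_ne c 0 with rfl | hc
  · simp only [zero_mul, zero_add, zero_smul]
    exact deriv_const s (γ d)
  · have haff : HasDerivAt (fun t : ℝ => c * t + d) c s := by
      simpa using ((hasDerivAt_id s).const_mul c).add_const d
    by_cases h : DifferentiableAt ℝ γ (c * s + d)
    · have := HasDerivAt.scomp (𝕜 := ℝ) s h.hasDerivAt haff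
      exact this.deriv
    · have hfx : (c * s + d - d) / c = s := by field_simp; ring
      have h2 : ¬ DifferentiableAt ℝ (fun t => γ (c * t + d)) s := by
        intro hcontra
        apply h
        rw [← hfx] at hcontra
        have hinner : DifferentiableAt ℝ (fun u : ℝ => (u - d) / c) (c * s + d) :=
          (differentiableAt_id.sub_const d).div_const c
        have hcomp := DifferentiableAt.comp (c * s + d) hcontra hinner
        have heq : ((fun t => γ (c * t + d)) ∘ fun u : ℝ => (u - d) / c) = γ := by
          funext u
          simp only [Function.comp_apply]
          congr 1
          field_simp; ring
        rwa [heq] at hcomp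
      rw [deriv_zero_of_not_differentiableAt h, deriv_zero_of_not_differentiableAt h2, smul_zero]

lemma exists_near {ω : Set E3} {δ δ' : ℝ} (hδ : 0 ≤ δ) (hδδ' : δ < δ') {z : E3}
    (hz : z ∈ closure (ω ∪ (ω + Metric.ball (0:E3) δ'))) {ε : ℝ} (hε : 0 < ε) :
    ∃ q ∈ ω ∪ (ω + Metric.ball (0:E3) δ), ‖z - q‖ < (δ' - δ) + ε := by
  obtain ⟨z', hz', hdz⟩ := Metric.mem_closure_iff.1 hz ε hε
  rcases hz' with hz' | hz'
  · exact ⟨z', Or.inl hz', by rw [← dist_eq_norm]; linarith⟩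
  · obtain ⟨w, hw, v, hv, rfl⟩ := hz'
    have hv' : ‖v‖ < δ' := by rwa [Metric.mem_ball, dist_zero_right] at hv
    have hδ'pos : 0 < δ' := lt_of_le_of_lt hδ hδδ'
    refine ⟨w + (δ/δ') • v, ?_, ?_⟩
    · rcases eq_or_lt_of_le hδ with h0 | h0
      · left
        rw [← h0]
        simpa using hw
      · right
        refine ⟨w, hw, (δ/δ') • v, ?_, rfl⟩
        rw [Metric.mem_ball, dist_zero_right, norm_smul, Real.norm_eq_abs,
          abs_of_pos (by positivity)]
        calc δ / δ' * ‖v‖ < δ / δ' * δ' := by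
              apply mul_lt_mul_of_pos_left hv' (by positivity)
          _ = δ := by field_simp
    · have hq : ‖w + v - (w + (δ/δ') • v)‖ = (1 - δ/δ') * ‖v‖ := by
        have : w + v - (w + (δ/δ') • v) = (1 - δ/δ') • v := by
          rw [sub_smul, one_smul]
          abel
        rw [this, norm_smul, Real.norm_eq_abs, abs_of_nonneg]
        have : δ / δ' ≤ 1 := by
          rw [div_le_one hδ'pos]; linarith
        linarith
      have h1 : (1 - δ/δ') * ‖v‖ ≤ (1 - δ/δ') * δ' := by
        apply mul_le_mul_of_nonneg_left hv'.le
        have : δ / δ' ≤ 1 := by rw [div_le_one hδ'pos]; linarith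
        linarith
      have h2 : (1 - δ/δ') * δ' = δ' - δ := by field_simp
      calc ‖z - (w + (δ/δ') • v)‖ ≤ ‖z - (w + v)‖ + ‖w + v - (w + (δ/δ') • v)‖ := by
            have : z - (w + (δ/δ') • v) = (z - (w + v)) + (w + v - (w + (δ/δ') • v)) := by abel
            rw [this]; exact norm_add_le _ _
        _ < ε + (δ' - δ) := by
            rw [hq]
            have hzz : ‖z - (w + v)‖ < ε := by rw [← dist_eq_norm]; exact hdz
            linarith
        _ = (δ' - δ) + ε := by ring
  

lemma ae_ne_point (x : ℝ) : ∀ᵐ s ∂(volume : Measure ℝ), s ≠ x := by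
  have h : (volume : Measure ℝ) {x} = 0 := measure_singleton x
  rw [ae_iff]
  convert h using 2
  ext s
  simp

lemma lipschitzWith_affine_real (c d : ℝ) :
    LipschitzWith (Real.nnabs c) (fun t : ℝ => c * t + d) := by
  apply LipschitzWith.of_dist_le_mul
  intro s t
  rw [Real.dist_eq, Real.dist_eq]
  have : c * s + d - (c * t + d) = c * (s - t) := by ring
  rw [this, abs_mul]
  simp [Real.coe_nnabs]

lemma deriv_congr_Ioo {F G : ℝ → E3} {p q : ℝ} (h : Set.EqOn F G (Set.Ioo p q)) {s : ℝ}
    (hs : s ∈ Set.Ioo p q) : deriv F s = deriv G s :=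
  Filter.EventuallyEq.deriv_eq (eventually_of_mem (Ioo_mem_nhds hs.1 hs.2) h)

lemma piece_integral_congr (α : E3 → ℝ) {F G : ℝ → E3} {p q : ℝ} (hpq : p ≤ q)
    (h : Set.EqOn F G (Set.Ioo p q)) :
    (∫ s in p..q, α (F s) * ‖deriv F s‖) = ∫ s in p..q, α (G s) * ‖deriv G s‖ := by
  apply intervalIntegral.integral_congr_ae
  filter_upwards [ae_ne_point q] with s hs hmem
  rw [Set.uIoc_of_le hpq] at hmem
  have hs' : s ∈ Set.Ioo p q := ⟨hmem.1, lt_of_le_of_ne hmem.2 hs⟩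
  rw [h hs', deriv_congr_Ioo h hs']

lemma piece_affine_eval {f : E3 → ℝ}
    {γ : ℝ → E3} {c d p q : ℝ} (hc : 0 < c) :
    (∫ s in p..q, f (γ (c * s + d)) * ‖deriv (fun t => γ (c * t + d)) s‖) =
      ∫ u in (c * p + d)..(c * q + d), f (γ u) * ‖deriv γ u‖ := by
  have hstep : Set.EqOn (fun s => f (γ (c * s + d)) * ‖deriv (fun t => γ (c * t + d)) s‖)
      (fun s => c * (f (γ (c * s + d)) * ‖deriv γ (c * s + d)‖)) (Set.uIcc p q) := by
    intro s _
    simp only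
    rw [deriv_comp_affine γ c d s, norm_smul, Real.norm_eq_abs, abs_of_pos hc]
    ring
  rw [intervalIntegral.integral_congr hstep]
  rw [intervalIntegral.integral_const_mul]
  rw [intervalIntegral.integral_comp_mul_add (fun u => f (γ u) * ‖deriv γ u‖) (ne_of_gt hc) d]
  rw [smul_eq_mul, ← mul_assoc, mul_inv_cancel₀ (ne_of_gt hc), one_mul]

set_option maxHeartbeats 2000000 in
lemma wdist_le_wdist_add {b δ δ' : ℝ} {ω : Set E3} (hb : 0 < b) (hb1 : b ≤ 1)
    (hconv : Convex ℝ ω) (hopen : IsOpen ω) (hδ : 0 ≤ δ) (hδδ' : δ < δ') (x y : E3) :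
    wdist (alphaW b ω δ) x y ≤ wdist (alphaW b ω δ') x y + 4 * (δ' - δ) := by
  have hα0 : ∀ e : ℝ, ∀ z, 0 ≤ alphaW b ω e z := fun e z => (alphaW_pos hb z).le
  have hα1 : ∀ e : ℝ, ∀ z, alphaW b ω e z ≤ 1 := fun e z => alphaW_le_one hb hb1 z
  have hαm : ∀ e : ℝ, Measurable (alphaW b ω e) := fun e => alphaW_measurable hopen
  refine le_of_forall_pos_le_add ?_
  intro ε hε
  -- near-optimal curve for δ'
  have hex := exists_lt_of_csInf_lt (wdist_set_nonempty (alphaW b ω δ') x y)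
    (show sInf _ < wdist (alphaW b ω δ') x y + ε/2 by
      unfold wdist; linarith [lt_add_of_pos_right (wdist (alphaW b ω δ') x y) (half_pos hε)])
  obtain ⟨L, ⟨γ, ⟨K, hK⟩, hγ0, hγ1, rfl⟩, hLlt⟩ := hex
  set C := closure (ω ∪ (ω + Metric.ball (0:E3) δ')) with hC
  set S := Set.Icc (0:ℝ) 1 ∩ γ ⁻¹' C with hSdef
  have hsubδ : (ω ∪ (ω + Metric.ball (0:E3) δ)) ⊆ C :=
    (omegaN_mono hδδ'.le).trans subset_closure
  have hsubδ' : (ω ∪ (ω + Metric.ball (0:E3) δ')) ⊆ C := subset_closure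
  have hφint : ∀ (e p q : ℝ),
      IntervalIntegrable (fun u => alphaW b ω e (γ u) * ‖deriv γ u‖) volume p q :=
    fun e p q => integrand_II (hαm e) (hα0 e) (hα1 e) hK p q
  rcases Set.eq_empty_or_nonempty S with hS | hSne
  · -- the curve never meets C : weights agree
    have heq : Set.EqOn (fun s => alphaW b ω δ (γ s) * ‖deriv γ s‖)
        (fun s => alphaW b ω δ' (γ s) * ‖deriv γ s‖) (Set.uIcc (0:ℝ) 1) := by
      intro s hs
      rw [Set.uIcc_of_le (by norm_num : (0:ℝ) ≤ 1)] at hs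
      have hnot : γ s ∉ C := by
        intro hmem
        have : s ∈ S := ⟨hs, hmem⟩
        rw [hS] at this
        exact this
      have h1 : γ s ∉ ω ∪ (ω + Metric.ball (0:E3) δ) := fun h => hnot (hsubδ h)
      have h2 : γ s ∉ ω ∪ (ω + Metric.ball (0:E3) δ') := fun h => hnot (hsubδ' h)
      simp only [alphaW, if_neg h1, if_neg h2]
    have hwle : wdist (alphaW b ω δ) x y ≤
        ∫ s in (0:ℝ)..1, alphaW b ω δ (γ s) * ‖deriv γ s‖ :=
      csInf_le (wdist_bddBelow _ (hα0 δ) x y) ⟨γ, ⟨K, hK⟩, hγ0, hγ1, rfl⟩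
    have heqI : (∫ s in (0:ℝ)..1, alphaW b ω δ (γ s) * ‖deriv γ s‖)
        = ∫ s in (0:ℝ)..1, alphaW b ω δ' (γ s) * ‖deriv γ s‖ :=
      intervalIntegral.integral_congr heq
    nlinarith [hwle, heqI, hLlt, hδδ']
  · -- main surgery
    have hScomp : IsCompact S := isCompact_Icc.inter_right
      (isClosed_closure.preimage hK.continuous)
    set t0 := sInf S with ht0def
    set t1 := sSup S with ht1def
    have ht0S : t0 ∈ S := hScomp.sInf_mem hSne
    have ht1S : t1 ∈ S := hScomp.sSup_mem hSne
    have hbddS : BddBelow S := hScomp.bddBelow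
    have hbddS' : BddAbove S := hScomp.bddAbove
    have ht00 : 0 ≤ t0 := ht0S.1.1
    have ht01 : t0 ≤ 1 := ht0S.1.2
    have ht10 : 0 ≤ t1 := ht1S.1.1
    have ht11 : t1 ≤ 1 := ht1S.1.2
    have ht0t1 : t0 ≤ t1 := csInf_le hbddS ht1S
    have hbefore : ∀ s, 0 ≤ s → s < t0 → γ s ∉ C := by
      intro s hs0 hst hmem
      have hsS : s ∈ S := ⟨⟨hs0, le_trans hst.le ht01⟩, hmem⟩
      exact absurd (csInf_le hbddS hsS) (not_le.2 hst)
    have hafter : ∀ s, s ≤ 1 → t1 < s → γ s ∉ C := by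
      intro s hs1 hst hmem
      have hsS : s ∈ S := ⟨⟨le_trans ht10 hst.le, hs1⟩, hmem⟩
      exact absurd (le_csSup hbddS' hsS) (not_le.2 hst)
    set ε' := ε / 8 with hε'def
    have hε' : 0 < ε' := by positivity
    obtain ⟨q0, hq0mem, hq0n⟩ := exists_near hδ hδδ' ht0S.2 hε'
    obtain ⟨q1, hq1mem, hq1n⟩ := exists_near hδ hδδ' ht1S.2 hε'
    set A := γ t0 with hA
    set B := γ t1 with hB
    set c1 : ℝ := 5 * t0 with hc1
    set c5 : ℝ := 5 * (1 - t1) with hc5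
    set d5 : ℝ := 5 * t1 - 4 with hd5
    set g1 : ℝ → E3 := fun s => γ (c1 * s + 0) with hg1
    set g2 : ℝ → E3 := fun s => A + (5 * s + -1) • (q0 - A) with hg2
    set g3 : ℝ → E3 := fun s => q0 + (5 * s + -2) • (q1 - q0) with hg3
    set g4 : ℝ → E3 := fun s => q1 + (5 * s + -3) • (B - q1) with hg4
    set g5 : ℝ → E3 := fun s => γ (c5 * s + d5) with hg5
    set M : NNReal := K * Real.nnabs c1 ⊔ (Real.nnabs 5 * ‖q0 - A‖₊ ⊔
      (Real.nnabs 5 * ‖q1 - q0‖₊ ⊔ (Real.nnabs 5 * ‖B - q1‖₊ ⊔ K * Real.nnabs c5))) with hM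
    have hlip1 : LipschitzWith M g1 :=
      (hK.comp (lipschitzWith_affine_real c1 0)).weaken le_sup_left
    have hlip2 : LipschitzWith M g2 :=
      (lipschitzWith_seg A (q0 - A) 5 (-1)).weaken (le_sup_of_le_right le_sup_left)
    have hlip3 : LipschitzWith M g3 :=
      (lipschitzWith_seg q0 (q1 - q0) 5 (-2)).weaken
        (le_sup_of_le_right (le_sup_of_le_right le_sup_left))
    have hlip4 : LipschitzWith M g4 :=
      (lipschitzWith_seg q1 (B - q1) 5 (-3)).weaken
        (le_sup_of_le_right (le_sup_of_le_right (le_sup_of_le_right le_sup_left)))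
    have hlip5 : LipschitzWith M g5 :=
      (hK.comp (lipschitzWith_affine_real c5 d5)).weaken
        (le_sup_of_le_right (le_sup_of_le_right (le_sup_of_le_right le_sup_right)))
    have hj12 : g1 (1/5 : ℝ) = g2 (1/5 : ℝ) := by
      simp only [hg1, hg2]
      have e1 : c1 * (1/5) + 0 = t0 := by rw [hc1]; ring
      rw [e1, ← hA]
      norm_num
    have hj23 : g2 (2/5 : ℝ) = g3 (2/5 : ℝ) := by
      simp only [hg2, hg3]
      norm_num
    have hj34 : g3 (3/5 : ℝ) = g4 (3/5 : ℝ) := by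
      simp only [hg3, hg4]
      norm_num
    have hj45 : g4 (4/5 : ℝ) = g5 (4/5 : ℝ) := by
      simp only [hg4, hg5]
      have e1 : c5 * (4/5) + d5 = t1 := by rw [hc5, hd5]; ring
      rw [e1, ← hB]
      norm_num
    set Γ : ℝ → E3 := fun s => if s ≤ 1/5 then g1 s else if s ≤ 2/5 then g2 s
      else if s ≤ 3/5 then g3 s else if s ≤ 4/5 then g4 s else g5 s with hΓ
    have hlipΓ : LipschitzWith M Γ := by
      have h45 := lipschitz_glue hlip4 hlip5 hj45
      have hj34' : g3 (3/5 : ℝ) = (fun s => if s ≤ (4/5:ℝ) then g4 s else g5 s) (3/5 : ℝ) := by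
        simp only
        rw [if_pos (by norm_num : (3/5:ℝ) ≤ 4/5)]
        exact hj34
      have h345 := lipschitz_glue hlip3 h45 hj34'
      have hj23' : g2 (2/5 : ℝ) = (fun s => if s ≤ (3/5:ℝ) then g3 s
          else if s ≤ (4/5:ℝ) then g4 s else g5 s) (2/5 : ℝ) := by
        simp only
        rw [if_pos (by norm_num : (2/5:ℝ) ≤ 3/5)]
        exact hj23
      have h2345 := lipschitz_glue hlip2 h345 hj23'
      have hj12' : g1 (1/5 : ℝ) = (fun s => if s ≤ (2/5:ℝ) then g2 s
          else if s ≤ (3/5:ℝ) then g3 s else if s ≤ (4/5:ℝ) then g4 s else g5 s) (1/5 : ℝ) := by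
        simp only
        rw [if_pos (by norm_num : (1/5:ℝ) ≤ 2/5)]
        exact hj12
      exact lipschitz_glue hlip1 h2345 hj12'
    have hΓ0 : Γ 0 = x := by
      simp only [hΓ]
      rw [if_pos (by norm_num : (0:ℝ) ≤ 1/5)]
      simp only [hg1]
      rw [show c1 * 0 + 0 = 0 by ring, hγ0]
    have hΓ1 : Γ 1 = y := by
      simp only [hΓ]
      rw [if_neg (by norm_num : ¬ (1:ℝ) ≤ 1/5), if_neg (by norm_num : ¬ (1:ℝ) ≤ 2/5),
        if_neg (by norm_num : ¬ (1:ℝ) ≤ 3/5), if_neg (by norm_num : ¬ (1:ℝ) ≤ 4/5)]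
      simp only [hg5]
      rw [show c5 * 1 + d5 = 1 by rw [hc5, hd5]; ring, hγ1]
    have hwle : wdist (alphaW b ω δ) x y ≤
        ∫ s in (0:ℝ)..1, alphaW b ω δ (Γ s) * ‖deriv Γ s‖ :=
      csInf_le (wdist_bddBelow _ (hα0 δ) x y) ⟨Γ, ⟨M, hlipΓ⟩, hΓ0, hΓ1, rfl⟩
    have hψint : ∀ p q : ℝ,
        IntervalIntegrable (fun s => alphaW b ω δ (Γ s) * ‖deriv Γ s‖) volume p q :=
      fun p q => integrand_II (hαm δ) (hα0 δ) (hα1 δ) hlipΓ p q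
    have hsplit : (∫ s in (0:ℝ)..1, alphaW b ω δ (Γ s) * ‖deriv Γ s‖) =
        (∫ s in (0:ℝ)..(1/5), alphaW b ω δ (Γ s) * ‖deriv Γ s‖) +
        ((∫ s in (1/5:ℝ)..(2/5), alphaW b ω δ (Γ s) * ‖deriv Γ s‖) +
        ((∫ s in (2/5:ℝ)..(3/5), alphaW b ω δ (Γ s) * ‖deriv Γ s‖) +
        ((∫ s in (3/5:ℝ)..(4/5), alphaW b ω δ (Γ s) * ‖deriv Γ s‖) +
        (∫ s in (4/5:ℝ)..1, alphaW b ω δ (Γ s) * ‖deriv Γ s‖)))) := by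
      rw [intervalIntegral.integral_add_adjacent_intervals (hψint (3/5) (4/5)) (hψint (4/5) 1),
        intervalIntegral.integral_add_adjacent_intervals (hψint (2/5) (3/5)) (hψint (3/5) 1),
        intervalIntegral.integral_add_adjacent_intervals (hψint (1/5) (2/5)) (hψint (2/5) 1),
        intervalIntegral.integral_add_adjacent_intervals (hψint 0 (1/5)) (hψint (1/5) 1)]
    have hEq1 : Set.EqOn Γ g1 (Set.Ioo (0:ℝ) (1/5)) := by
      intro u hu
      simp only [hΓ]
      rw [if_pos hu.2.le]
    have hEq2 : Set.EqOn Γ g2 (Set.Ioo (1/5:ℝ) (2/5)) := by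
      intro u hu
      simp only [hΓ]
      rw [if_neg (not_le.2 hu.1), if_pos hu.2.le]
    have hEq3 : Set.EqOn Γ g3 (Set.Ioo (2/5:ℝ) (3/5)) := by
      intro u hu
      simp only [hΓ]
      rw [if_neg (not_le.2 (lt_trans (by norm_num) hu.1)), if_neg (not_le.2 hu.1),
        if_pos hu.2.le]
    have hEq4 : Set.EqOn Γ g4 (Set.Ioo (3/5:ℝ) (4/5)) := by
      intro u hu
      simp only [hΓ]
      rw [if_neg (not_le.2 (lt_trans (by norm_num) hu.1)),
        if_neg (not_le.2 (lt_trans (by norm_num) hu.1)), if_neg (not_le.2 hu.1),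
        if_pos hu.2.le]
    have hEq5 : Set.EqOn Γ g5 (Set.Ioo (4/5:ℝ) 1) := by
      intro u hu
      simp only [hΓ]
      rw [if_neg (not_le.2 (lt_trans (by norm_num) hu.1)),
        if_neg (not_le.2 (lt_trans (by norm_num) hu.1)),
        if_neg (not_le.2 (lt_trans (by norm_num) hu.1)), if_neg (not_le.2 hu.1)]
    have hP1 := piece_integral_congr (alphaW b ω δ) (by norm_num : (0:ℝ) ≤ 1/5) hEq1
    have hP2 := piece_integral_congr (alphaW b ω δ) (by norm_num : (1/5:ℝ) ≤ 2/5) hEq2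
    have hP3 := piece_integral_congr (alphaW b ω δ) (by norm_num : (2/5:ℝ) ≤ 3/5) hEq3
    have hP4 := piece_integral_congr (alphaW b ω δ) (by norm_num : (3/5:ℝ) ≤ 4/5) hEq4
    have hP5 := piece_integral_congr (alphaW b ω δ) (by norm_num : (4/5:ℝ) ≤ 1) hEq5
    have hval1 : (∫ s in (0:ℝ)..(1/5), alphaW b ω δ (g1 s) * ‖deriv g1 s‖) =
        ∫ u in (0:ℝ)..t0, alphaW b ω δ' (γ u) * ‖deriv γ u‖ := by
      have hcong0 : (∫ u in (0:ℝ)..t0, alphaW b ω δ (γ u) * ‖deriv γ u‖) =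
          ∫ u in (0:ℝ)..t0, alphaW b ω δ' (γ u) * ‖deriv γ u‖ := by
        apply intervalIntegral.integral_congr_ae
        filter_upwards [ae_ne_point t0] with s hs hmem
        rw [Set.uIoc_of_le ht00] at hmem
        have hnot : γ s ∉ C := hbefore s hmem.1.le (lt_of_le_of_ne hmem.2 hs)
        have h1 : γ s ∉ ω ∪ (ω + Metric.ball (0:E3) δ) := fun h => hnot (hsubδ h)
        have h2 : γ s ∉ ω ∪ (ω + Metric.ball (0:E3) δ') := fun h => hnot (hsubδ' h)
        simp only [alphaW, if_neg h1, if_neg h2]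
      rcases eq_or_lt_of_le ht00 with h0 | h0
      · have hc1z : c1 = 0 := by rw [hc1, ← h0]; ring
        have hg1const : ∀ s : ℝ, deriv g1 s = 0 := by
          intro s
          simp only [hg1]
          rw [deriv_comp_affine γ c1 0 s, hc1z, zero_smul]
        have hlhs : Set.EqOn (fun s => alphaW b ω δ (g1 s) * ‖deriv g1 s‖)
            (fun _ => (0:ℝ)) (Set.uIcc (0:ℝ) (1/5)) := by
          intro s _
          simp only
          rw [hg1const s, norm_zero, mul_zero]
        rw [intervalIntegral.integral_congr hlhs, ← h0]
        simp
      · have hc1pos : 0 < c1 := by rw [hc1]; linarith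
        have hx : (∫ s in (0:ℝ)..(1/5), alphaW b ω δ (g1 s) * ‖deriv g1 s‖) =
            ∫ u in (c1 * 0 + 0)..(c1 * (1/5) + 0), alphaW b ω δ (γ u) * ‖deriv γ u‖ := by
          simp only [hg1]
          exact piece_affine_eval hc1pos
        rw [hx, show c1 * 0 + 0 = (0:ℝ) by ring, show c1 * (1/5) + 0 = t0 by rw [hc1]; ring]
        exact hcong0
    have hval5 : (∫ s in (4/5:ℝ)..1, alphaW b ω δ (g5 s) * ‖deriv g5 s‖) =
        ∫ u in t1..(1:ℝ), alphaW b ω δ' (γ u) * ‖deriv γ u‖ := by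
      have hcong1 : (∫ u in t1..(1:ℝ), alphaW b ω δ (γ u) * ‖deriv γ u‖) =
          ∫ u in t1..(1:ℝ), alphaW b ω δ' (γ u) * ‖deriv γ u‖ := by
        apply intervalIntegral.integral_congr_ae
        apply ae_of_all
        intro s hmem
        rw [Set.uIoc_of_le ht11] at hmem
        have hnot : γ s ∉ C := hafter s hmem.2 hmem.1
        have h1 : γ s ∉ ω ∪ (ω + Metric.ball (0:E3) δ) := fun h => hnot (hsubδ h)
        have h2 : γ s ∉ ω ∪ (ω + Metric.ball (0:E3) δ') := fun h => hnot (hsubδ' h)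
        simp only [alphaW, if_neg h1, if_neg h2]
      rcases eq_or_lt_of_le ht11 with h0 | h0
      · have hc5z : c5 = 0 := by rw [hc5, h0]; ring
        have hg5const : ∀ s : ℝ, deriv g5 s = 0 := by
          intro s
          simp only [hg5]
          rw [deriv_comp_affine γ c5 d5 s, hc5z, zero_smul]
        have hlhs : Set.EqOn (fun s => alphaW b ω δ (g5 s) * ‖deriv g5 s‖)
            (fun _ => (0:ℝ)) (Set.uIcc (4/5:ℝ) 1) := by
          intro s _
          simp only
          rw [hg5const s, norm_zero, mul_zero]
        rw [intervalIntegral.integral_congr hlhs, h0]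
        simp
      · have hc5pos : 0 < c5 := by rw [hc5]; linarith
        have hx : (∫ s in (4/5:ℝ)..1, alphaW b ω δ (g5 s) * ‖deriv g5 s‖) =
            ∫ u in (c5 * (4/5) + d5)..(c5 * 1 + d5), alphaW b ω δ (γ u) * ‖deriv γ u‖ := by
          simp only [hg5]
          exact piece_affine_eval hc5pos
        rw [hx, show c5 * (4/5) + d5 = t1 by rw [hc5, hd5]; ring,
          show c5 * 1 + d5 = (1:ℝ) by rw [hc5, hd5]; ring]
        exact hcong1
    have hval2 : (∫ s in (1/5:ℝ)..(2/5), alphaW b ω δ (g2 s) * ‖deriv g2 s‖) ≤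
        (δ' - δ) + ε' := by
      have hder : ∀ s : ℝ, deriv g2 s = (5:ℝ) • (q0 - A) := by
        intro s
        simp only [hg2]
        exact deriv_seg A (q0 - A) 5 (-1) s
      have hbound : ∀ s ∈ Set.Icc (1/5:ℝ) (2/5),
          alphaW b ω δ (g2 s) * ‖deriv g2 s‖ ≤ 5 * ‖q0 - A‖ := by
        intro s _
        rw [hder s, norm_smul, Real.norm_eq_abs, show |(5:ℝ)| = 5 by norm_num]
        calc alphaW b ω δ (g2 s) * (5 * ‖q0 - A‖) ≤ 1 * (5 * ‖q0 - A‖) :=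
              mul_le_mul_of_nonneg_right (hα1 δ _) (by positivity)
          _ = 5 * ‖q0 - A‖ := one_mul _
      calc (∫ s in (1/5:ℝ)..(2/5), alphaW b ω δ (g2 s) * ‖deriv g2 s‖)
          ≤ ∫ _ in (1/5:ℝ)..(2/5), 5 * ‖q0 - A‖ :=
            intervalIntegral.integral_mono_on (by norm_num)
              (integrand_II (hαm δ) (hα0 δ) (hα1 δ) hlip2 (1/5) (2/5))
              intervalIntegrable_const hbound
        _ = (2/5 - 1/5) * (5 * ‖q0 - A‖) := by
            rw [intervalIntegral.integral_const, smul_eq_mul]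
        _ = ‖q0 - A‖ := by ring
        _ = ‖A - q0‖ := norm_sub_rev _ _
        _ ≤ (δ' - δ) + ε' := hq0n.le
    have hval4 : (∫ s in (3/5:ℝ)..(4/5), alphaW b ω δ (g4 s) * ‖deriv g4 s‖) ≤
        (δ' - δ) + ε' := by
      have hder : ∀ s : ℝ, deriv g4 s = (5:ℝ) • (B - q1) := by
        intro s
        simp only [hg4]
        exact deriv_seg q1 (B - q1) 5 (-3) s
      have hbound : ∀ s ∈ Set.Icc (3/5:ℝ) (4/5),
          alphaW b ω δ (g4 s) * ‖deriv g4 s‖ ≤ 5 * ‖B - q1‖ := by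
        intro s _
        rw [hder s, norm_smul, Real.norm_eq_abs, show |(5:ℝ)| = 5 by norm_num]
        calc alphaW b ω δ (g4 s) * (5 * ‖B - q1‖) ≤ 1 * (5 * ‖B - q1‖) :=
              mul_le_mul_of_nonneg_right (hα1 δ _) (by positivity)
          _ = 5 * ‖B - q1‖ := one_mul _
      calc (∫ s in (3/5:ℝ)..(4/5), alphaW b ω δ (g4 s) * ‖deriv g4 s‖)
          ≤ ∫ _ in (3/5:ℝ)..(4/5), 5 * ‖B - q1‖ :=
            intervalIntegral.integral_mono_on (by norm_num)
              (integrand_II (hαm δ) (hα0 δ) (hα1 δ) hlip4 (3/5) (4/5))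
              intervalIntegrable_const hbound
        _ = (4/5 - 3/5) * (5 * ‖B - q1‖) := by
            rw [intervalIntegral.integral_const, smul_eq_mul]
        _ = ‖B - q1‖ := by ring
        _ ≤ (δ' - δ) + ε' := hq1n.le
    have hval3 : (∫ s in (2/5:ℝ)..(3/5), alphaW b ω δ (g3 s) * ‖deriv g3 s‖) ≤
        (∫ u in t0..t1, alphaW b ω δ' (γ u) * ‖deriv γ u‖) + 2 * ((δ' - δ) + ε') := by
      have hder : ∀ s : ℝ, deriv g3 s = (5:ℝ) • (q1 - q0) := by
        intro s
        simp only [hg3]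
        exact deriv_seg q0 (q1 - q0) 5 (-2) s
      have hmem3 : ∀ s ∈ Set.uIcc (2/5:ℝ) (3/5), alphaW b ω δ (g3 s) = b^2 := by
        intro s hs
        rw [Set.uIcc_of_le (by norm_num : (2/5:ℝ) ≤ 3/5)] at hs
        have ht1' : (0:ℝ) ≤ 5 * s + -2 := by linarith [hs.1]
        have ht2' : 5 * s + -2 ≤ (1:ℝ) := by linarith [hs.2]
        have hmem : g3 s ∈ ω ∪ (ω + Metric.ball (0:E3) δ) := by
          simp only [hg3]
          exact (omegaN_convex hconv hδ).add_smul_sub_mem hq0mem hq1mem ⟨ht1', ht2'⟩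
        simp only [alphaW, if_pos hmem]
      have heval : (∫ s in (2/5:ℝ)..(3/5), alphaW b ω δ (g3 s) * ‖deriv g3 s‖) =
          b^2 * ‖q1 - q0‖ := by
        have heq : Set.EqOn (fun s => alphaW b ω δ (g3 s) * ‖deriv g3 s‖)
            (fun _ => b^2 * (5 * ‖q1 - q0‖)) (Set.uIcc (2/5:ℝ) (3/5)) := by
          intro s hs
          simp only
          rw [hmem3 s hs, hder s, norm_smul, Real.norm_eq_abs,
            show |(5:ℝ)| = 5 by norm_num]
        rw [intervalIntegral.integral_congr heq, intervalIntegral.integral_const, smul_eq_mul]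
        ring
      rw [heval]
      have htri : ‖q1 - q0‖ ≤ ‖A - q0‖ + ‖B - A‖ + ‖B - q1‖ := by
        have hid : q1 - q0 = (A - q0) + (B - A) - (B - q1) := by abel
        rw [hid]
        calc ‖(A - q0) + (B - A) - (B - q1)‖ ≤ ‖(A - q0) + (B - A)‖ + ‖B - q1‖ :=
              norm_sub_le _ _
          _ ≤ ‖A - q0‖ + ‖B - A‖ + ‖B - q1‖ := by
              have := norm_add_le (A - q0) (B - A)
              linarith
      have hftc : ‖B - A‖ ≤ ∫ u in t0..t1, ‖deriv γ u‖ := by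
        rw [hA, hB]
        exact lipschitz_norm_sub_le_integral hK ht0t1
      have hmid : b^2 * (∫ u in t0..t1, ‖deriv γ u‖) ≤
          ∫ u in t0..t1, alphaW b ω δ' (γ u) * ‖deriv γ u‖ := by
        rw [← intervalIntegral.integral_const_mul]
        apply intervalIntegral.integral_mono_on ht0t1 ?_ (hφint δ' t0 t1) ?_
        · apply intervalIntegrable_of_bound (C := (K:ℝ)) ?_ ?_
          · exact (measurable_deriv γ).norm.const_mul _
          · intro s
            rw [abs_of_nonneg (by positivity)]
            calc b^2 * ‖deriv γ s‖ ≤ 1 * ‖deriv γ s‖ :=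
                  mul_le_mul_of_nonneg_right (by nlinarith) (norm_nonneg _)
              _ = ‖deriv γ s‖ := one_mul _
              _ ≤ K := norm_deriv_le_lip hK s
        · intro u _
          exact mul_le_mul_of_nonneg_right (sq_le_alphaW hb hb1 _) (norm_nonneg _)
      have hintnn : 0 ≤ ∫ u in t0..t1, ‖deriv γ u‖ :=
        intervalIntegral.integral_nonneg ht0t1 (fun u _ => norm_nonneg _)
      calc b^2 * ‖q1 - q0‖ ≤ b^2 * (‖A - q0‖ + ‖B - A‖ + ‖B - q1‖) :=
            mul_le_mul_of_nonneg_left htri (by positivity)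
        _ = b^2 * ‖B - A‖ + b^2 * ‖A - q0‖ + b^2 * ‖B - q1‖ := by ring
        _ ≤ b^2 * (∫ u in t0..t1, ‖deriv γ u‖) + 1 * ((δ' - δ) + ε') + 1 * ((δ' - δ) + ε') := by
            have h1 : b^2 * ‖B - A‖ ≤ b^2 * (∫ u in t0..t1, ‖deriv γ u‖) :=
              mul_le_mul_of_nonneg_left hftc (by positivity)
            have h2 : b^2 * ‖A - q0‖ ≤ 1 * ((δ' - δ) + ε') :=
              mul_le_mul (by nlinarith) hq0n.le (norm_nonneg _) zero_le_one
            have h3 : b^2 * ‖B - q1‖ ≤ 1 * ((δ' - δ) + ε') :=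
              mul_le_mul (by nlinarith) hq1n.le (norm_nonneg _) zero_le_one
            linarith
        _ ≤ (∫ u in t0..t1, alphaW b ω δ' (γ u) * ‖deriv γ u‖) + 2 * ((δ' - δ) + ε') := by
            linarith [hmid]
    have hLsplit : (∫ s in (0:ℝ)..1, alphaW b ω δ' (γ s) * ‖deriv γ s‖) =
        (∫ u in (0:ℝ)..t0, alphaW b ω δ' (γ u) * ‖deriv γ u‖) +
        ((∫ u in t0..t1, alphaW b ω δ' (γ u) * ‖deriv γ u‖) +
        (∫ u in t1..(1:ℝ), alphaW b ω δ' (γ u) * ‖deriv γ u‖)) := by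
      rw [intervalIntegral.integral_add_adjacent_intervals (hφint δ' t0 t1) (hφint δ' t1 1),
        intervalIntegral.integral_add_adjacent_intervals (hφint δ' 0 t0) (hφint δ' t0 1)]
    rw [hsplit, hP1, hP2, hP3, hP4, hP5] at hwle
    rw [hLsplit] at hLlt
    linarith [hwle, hval1, hval2, hval3, hval4, hval5, hLlt]


/-- Lipschitz continuity of the minimal connection length in the parameter `δ`:
`|L(C, d_{α_δ}) - L(C, d_{α_{δ'}})| ≤ 4k|δ' - δ|`. -/
theorem stmt_9 (b : ℝ) (hb : 0 < b) (hb1 : b < 1) (ω : Set E3)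
    (hconv : Convex ℝ ω) (hopen : IsOpen ω) (hbdd : Bornology.IsBounded ω)
    (δ₀ : ℝ) (hδ₀ : 0 < δ₀)
    (k : ℕ) (hk : 0 < k) (p n : Fin k → E3)
    (hp : Function.Injective p) (hn : Function.Injective n) (hpn : ∀ i j, p i ≠ n j)
    (δ δ' : ℝ) (hδ : 0 ≤ δ) (hδδ' : δ < δ') (hδ' : δ' ≤ δ₀) :
    |(⨅ σ : Equiv.Perm (Fin k), ∑ i, wdist (alphaW b ω δ) (p i) (n (σ i))) -
      (⨅ σ : Equiv.Perm (Fin k), ∑ i, wdist (alphaW b ω δ') (p i) (n (σ i)))| ≤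
      4 * k * |δ' - δ| := by
  have hble : b ≤ 1 := hb1.le
  have hr : (0:ℝ) < δ' - δ := by linarith
  have hpt1 : ∀ u v : E3, wdist (alphaW b ω δ') u v ≤ wdist (alphaW b ω δ) u v := by
    intro u v
    exact wdist_mono (alphaW_measurable hopen) (fun z => (alphaW_pos hb z).le)
      (alphaW_measurable hopen) (fun z => (alphaW_pos hb z).le)
      (fun z => alphaW_le_one hb hble z) (fun z => alphaW_mono hb hble hδδ'.le z) u v
  have hpt2 : ∀ u v : E3, wdist (alphaW b ω δ) u v ≤ wdist (alphaW b ω δ') u v + 4 * (δ' - δ) :=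
    fun u v => wdist_le_wdist_add hb hble hconv hopen hδ hδδ' u v
  set W : Equiv.Perm (Fin k) → ℝ :=
    fun σ => ∑ i, wdist (alphaW b ω δ) (p i) (n (σ i)) with hW
  set W' : Equiv.Perm (Fin k) → ℝ :=
    fun σ => ∑ i, wdist (alphaW b ω δ') (p i) (n (σ i)) with hW'
  have h1 : ∀ σ, W' σ ≤ W σ := fun σ => Finset.sum_le_sum fun i _ => hpt1 _ _
  have h2 : ∀ σ, W σ ≤ W' σ + 4 * (k:ℝ) * (δ' - δ) := by
    intro σ
    calc W σ ≤ ∑ i, (wdist (alphaW b ω δ') (p i) (n (σ i)) + 4 * (δ' - δ)) :=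
          Finset.sum_le_sum fun i _ => hpt2 _ _
      _ = W' σ + 4 * (k:ℝ) * (δ' - δ) := by
          rw [Finset.sum_add_distrib, Finset.sum_const, Finset.card_univ, Fintype.card_fin,
            nsmul_eq_mul, hW']
          ring
  have hbd : BddBelow (Set.range W) := (Set.finite_range W).bddBelow
  have hbd' : BddBelow (Set.range W') := (Set.finite_range W').bddBelow
  have hle1 : (⨅ σ, W' σ) ≤ ⨅ σ, W σ := ciInf_mono hbd' h1
  have hle2 : (⨅ σ, W σ) ≤ (⨅ σ, W' σ) + 4 * (k:ℝ) * (δ' - δ) := by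
    obtain ⟨σ₀, hσ₀⟩ := Finite.exists_min W'
    have hinf' : (⨅ σ, W' σ) = W' σ₀ :=
      le_antisymm (ciInf_le hbd' σ₀) (le_ciInf hσ₀)
    calc (⨅ σ, W σ) ≤ W σ₀ := ciInf_le hbd σ₀
      _ ≤ W' σ₀ + 4 * (k:ℝ) * (δ' - δ) := h2 σ₀
      _ = (⨅ σ, W' σ) + 4 * (k:ℝ) * (δ' - δ) := by rw [hinf']
  rw [abs_of_pos hr, abs_of_nonneg (sub_nonneg.2 hle1)]
  linarith [hle2]

end
end
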